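/- arXiv:2106.00290 — 2 statements merged into one kernel-verified Lean document; each statement's English description precedes it below -/
import Mathlib

section
/- Let G be a group generated by a set S with a presentation whose relations are all of the form w s w^{-1} = t for s, t ∈ S and words w. Then the natural surjection Φ : Env(D(S^G)) → G is an isomorphism of groups. -/
/-- The set of all conjugates of elements of `S` in `G`. -/
def conjSet (G : Type*) [Group G] (S : Set G) : Set G :=
  {x | ∃ s ∈ S, ∃ g : G, x = g * s * g⁻¹}

theorem conjSet.conj_mem {G : Type*} [Group G] {S : Set G} {x : G}
    (hx : x ∈ conjSet G S) (g : G) : g * x * g⁻¹ ∈ conjSet G S := by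
  obtain ⟨s, hs, h, rfl⟩ := hx
  exact ⟨s, hs, g * h, by group⟩

/-- The Dehn quandle operation `x * y = y x y⁻¹` on the set of conjugates of `S`. -/
def dehnOp {G : Type*} [Group G] {S : Set G} (x y : conjSet G S) : conjSet G S :=
  ⟨(y : G) * (x : G) * (y : G)⁻¹, conjSet.conj_mem x.2 (y : G)⟩

/-- Relations defining the enveloping group of the Dehn quandle `D(S^G)`:
`e_{x*y} = e_y e_x e_y⁻¹`. -/
def dehnEnvRels (G : Type*) [Group G] (S : Set G) : Set (FreeGroup (conjSet G S)) :=
  {r | ∃ x y : conjSet G S,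
    r = FreeGroup.of (dehnOp x y) *
      (FreeGroup.of y * FreeGroup.of x * (FreeGroup.of y)⁻¹)⁻¹}

/-- The enveloping group of the Dehn quandle `D(S^G)`. -/
abbrev DehnEnv (G : Type*) [Group G] (S : Set G) : Type _ :=
  PresentedGroup (dehnEnvRels G S)

/-! The key fact about `Φ : Env(D(S^G)) → G`, `e_x ↦ x`, is that conjugation by `e` in the
enveloping group acts on the generators `e_x` as conjugation by `Φ e` acts on `x`. Hence a
homomorphism `ψ : G → Env(D(S^G))` with `ψ s = e_s` on a generating set `S` is inverse to `Φ`: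
`Φ ∘ ψ` fixes `S`, and `ψ (g s g⁻¹) = ψ g e_s (ψ g)⁻¹ = e_{g s g⁻¹}`. For a presentation by
relations `w s w⁻¹ = t`, the assignment `s ↦ e_s` respects the relations, since
`ψ w e_s (ψ w)⁻¹ = e_{w s w⁻¹} = e_t`; so such a `ψ` exists. -/

lemma subset_conjSet {G : Type*} [Group G] (S : Set G) : S ⊆ conjSet G S :=
  fun s hs => ⟨s, hs, 1, by group⟩

namespace DehnEnv

variable {G : Type*} [Group G] {S : Set G}

lemma of_dehnOp (x y : conjSet G S) :
    (PresentedGroup.of (dehnOp x y) : DehnEnv G S)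
      = PresentedGroup.of y * PresentedGroup.of x * (PresentedGroup.of y)⁻¹ := by
  have h := PresentedGroup.one_of_mem (rels := dehnEnvRels G S) ⟨x, y, rfl⟩
  simp only [map_mul, map_inv, mul_inv_eq_one] at h
  exact h

lemma lift_coe_eq_one_of_mem_dehnEnvRels :
    ∀ r ∈ dehnEnvRels G S, FreeGroup.lift (fun x : conjSet G S => (x : G)) r = 1 := by
  rintro r ⟨x, y, rfl⟩
  simp [dehnOp]

/-- The map `Φ`. -/
def toGroup : DehnEnv G S →* G :=
  PresentedGroup.toGroup lift_coe_eq_one_of_mem_dehnEnvRels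

@[simp]
lemma toGroup_of (x : conjSet G S) : toGroup (PresentedGroup.of x : DehnEnv G S) = x :=
  PresentedGroup.toGroup.of _

lemma of_conj (e : DehnEnv G S) (x : conjSet G S) :
    (PresentedGroup.of ⟨toGroup e * x * (toGroup e)⁻¹, conjSet.conj_mem x.2 _⟩ : DehnEnv G S)
      = e * PresentedGroup.of x * e⁻¹ := by
  have he : e ∈ Subgroup.closure (Set.range (PresentedGroup.of (rels := dehnEnvRels G S))) := by
    simp only [PresentedGroup.closure_range_of, Subgroup.mem_top]
  induction he using Subgroup.closure_induction generalizing x with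
  | mem _ hy =>
    obtain ⟨y, rfl⟩ := hy
    simp only [toGroup_of]
    exact of_dehnOp x y
  | one => simp only [map_one, one_mul, inv_one, mul_one]
  | mul e f _ _ ihe ihf =>
    calc (PresentedGroup.of ⟨toGroup (e * f) * x * (toGroup (e * f))⁻¹, _⟩ : DehnEnv G S)
        = PresentedGroup.of ⟨toGroup e * (toGroup f * x * (toGroup f)⁻¹) * (toGroup e)⁻¹,
            conjSet.conj_mem (conjSet.conj_mem x.2 _) _⟩ :=
          congrArg _ (Subtype.ext (by simp only [map_mul, mul_inv_rev, mul_assoc]))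
      _ = e * (f * PresentedGroup.of x * f⁻¹) * e⁻¹ := by rw [← ihf]; exact ihe ⟨_, _⟩
      _ = e * f * PresentedGroup.of x * (e * f)⁻¹ := by group
  | inv e _ ihe =>
    set z : conjSet G S := ⟨toGroup e⁻¹ * x * (toGroup e⁻¹)⁻¹, conjSet.conj_mem x.2 _⟩
    have hx : (PresentedGroup.of x : DehnEnv G S) = e * PresentedGroup.of z * e⁻¹ := by
      rw [← ihe z]
      congr 2
      simp only [z, map_inv, inv_inv, mul_assoc, mul_inv_cancel_left, mul_inv_cancel, mul_one]
    rw [hx]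
    group

theorem toGroup_bijective_of_section (hS : Subgroup.closure S = ⊤) (ψ : G →* DehnEnv G S)
    (hψ : ∀ s (hs : s ∈ S), ψ s = PresentedGroup.of ⟨s, subset_conjSet S hs⟩) :
    Function.Bijective (toGroup : DehnEnv G S →* G) := by
  have h_toGroup_comp : toGroup.comp ψ = MonoidHom.id G :=
    MonoidHom.eq_of_eqOn_dense hS fun s hs => by simp [hψ s hs]
  have h_comp_toGroup : ψ.comp toGroup = MonoidHom.id (DehnEnv G S) := by
    refine PresentedGroup.ext fun ⟨x, s, hs, g, hx⟩ => ?_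
    subst hx
    have hg : toGroup (ψ g) = g := DFunLike.congr_fun h_toGroup_comp g
    simp only [MonoidHom.comp_apply, toGroup_of, MonoidHom.id_apply, map_mul, map_inv, hψ s hs,
      ← of_conj, hg]
  exact Function.bijective_iff_has_inverse.2
    ⟨ψ, DFunLike.congr_fun h_comp_toGroup, DFunLike.congr_fun h_toGroup_comp⟩

end DehnEnv

section ConjugationPresentation

variable {α : Type*}

def envGen (rels : Set (FreeGroup α)) (a : α) :
    DehnEnv (PresentedGroup rels) (Set.range (PresentedGroup.of : α → PresentedGroup rels)) :=
  PresentedGroup.of ⟨PresentedGroup.of a, subset_conjSet _ (Set.mem_range_self a)⟩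

variable {rels : Set (FreeGroup α)}

lemma toGroup_comp_lift_envGen :
    DehnEnv.toGroup.comp (FreeGroup.lift (envGen rels)) = PresentedGroup.mk rels :=
  FreeGroup.ext_hom _ _ fun a => by
    simp only [MonoidHom.coe_comp, Function.comp_apply, FreeGroup.lift_apply_of, envGen,
      DehnEnv.toGroup_of]
    rfl

lemma lift_envGen_eq_one_of_conj {w : FreeGroup α} {s t : α}
    (hr : PresentedGroup.mk rels (w * FreeGroup.of s * w⁻¹ * (FreeGroup.of t)⁻¹) = 1) :
    FreeGroup.lift (envGen rels) (w * FreeGroup.of s * w⁻¹ * (FreeGroup.of t)⁻¹) = 1 := by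
  have hψw : DehnEnv.toGroup (FreeGroup.lift (envGen rels) w) = PresentedGroup.mk rels w :=
    DFunLike.congr_fun toGroup_comp_lift_envGen w
  have hst : PresentedGroup.mk rels w * PresentedGroup.of s * (PresentedGroup.mk rels w)⁻¹
      = PresentedGroup.of t := by
    simp only [map_mul, map_inv, mul_inv_eq_one] at hr
    exact hr
  simp only [map_mul, map_inv, FreeGroup.lift_apply_of, mul_inv_eq_one]
  rw [envGen, ← DehnEnv.of_conj]
  simp only [hψw, envGen, hst]

end ConjugationPresentation

/-- If `G` has a presentation all of whose relations have the form `w s w⁻¹ = t` with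
`s, t` generators, then the natural surjection `Φ : Env(D(S^G)) → G` is an isomorphism. -/
theorem envelGroup_iso_of_conjugation_relations (α : Type*) (rels : Set (FreeGroup α))
    (hrels : ∀ r ∈ rels, ∃ (w : FreeGroup α) (s t : α),
      r = w * FreeGroup.of s * w⁻¹ * (FreeGroup.of t)⁻¹) :
    ∃ Φ : DehnEnv (PresentedGroup rels)
        (Set.range (PresentedGroup.of : α → PresentedGroup rels)) →* PresentedGroup rels,
      (∀ x : conjSet (PresentedGroup rels)
          (Set.range (PresentedGroup.of : α → PresentedGroup rels)),
        Φ (PresentedGroup.of x) = (x : PresentedGroup rels)) ∧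
      Function.Bijective Φ := by
  have hψ : ∀ r ∈ rels, FreeGroup.lift (envGen rels) r = 1 := by
    intro r hr
    obtain ⟨w, s, t, rfl⟩ := hrels r hr
    exact lift_envGen_eq_one_of_conj (PresentedGroup.one_of_mem hr)
  refine ⟨DehnEnv.toGroup, DehnEnv.toGroup_of,
    DehnEnv.toGroup_bijective_of_section (PresentedGroup.closure_range_of rels)
      (PresentedGroup.toGroup hψ) ?_⟩
  rintro _ ⟨a, rfl⟩
  exact PresentedGroup.toGroup.of hψ
end

section
/- Free involutory quandles are left orderable: for any set S, the free involutory quandle on S admits a strict linear order < such that x < y implies z*x < z*y for all z. -/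
/-- The universal Coxeter group on `S`: the free product of copies of `ℤ/2` indexed
by `S`, presented by the relations `s² = 1`. -/
abbrev UCox (S : Type*) : Type _ :=
  PresentedGroup {r : FreeGroup S | ∃ s : S, r = (FreeGroup.of s) ^ 2}

/-!
The universal Coxeter group embeds in `FreeGroup S ⋊ ℤ/2` by `s ↦ (x_s, σ)`, where `σ` acts by
inverting the generators of the free group. A reflection `a` goes to some `(ι a, σ)`, and then
`a z a⁻¹` goes to `(ι a * σ (ι z) * ι a, σ)`. So `ι` turns left translation by `z` into
`x ↦ x * c * x` in the free group, which is strictly monotone for any bi-invariant order.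
Free groups are bi-orderable: the Magnus map `x_s ↦ 1 + X s` embeds `FreeGroup S` into the units
of noncommutative power series over `ℤ`, and the lexicographic order on coefficients, along a
well-order of words refining length, is invariant under multiplication by series with constant
term `1`.
-/

namespace List

variable {α : Type*}

theorem exists_eq_replicate_append (p : α) (L : List α) :
    ∃ m L', L = replicate m p ++ L' ∧ L'.head? ≠ some p := by
  induction L with
  | nil => exact ⟨0, [], rfl, by simp⟩
  | cons q L ih =>
    by_cases hq : q = p
    · obtain ⟨m, L', rfl, h⟩ := ih
      exact ⟨m + 1, L', by rw [hq]; rfl, h⟩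
    · exact ⟨0, q :: L, rfl, by simpa using hq⟩

theorem destutter_replicate_append [DecidableEq α] {s : α} {t : List α} (ht : t.head? ≠ some s)
    (m : ℕ) : (replicate (m + 1) s ++ t).destutter (· ≠ ·) = s :: t.destutter (· ≠ ·) := by
  induction m with
  | zero =>
    cases t with
    | nil => simp
    | cons b t =>
      have hsb : s ≠ b := fun h => ht (by simp [h])
      simp [hsb, destutter_cons']
  | succ m ih =>
    rw [replicate_succ, cons_append, ← ih, replicate_succ, cons_append, destutter_cons_cons,
      if_neg (not_not.2 rfl), destutter_cons']

theorem head?_destutter (R : α → α → Prop) [DecidableRel R] (l : List α) :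
    (l.destutter R).head? = l.head? := by
  cases l with
  | nil => rfl
  | cons a l =>
    rw [destutter_cons']
    induction l with
    | nil => rfl
    | cons b l ih =>
      rw [destutter'_cons]
      split_ifs
      · rfl
      · exact ih

/-- Satisfied by every `w ∈ t₁* t₂* ⋯ tₙ*`, the shape of the words in the support of the Magnus
image of a word with letters `t`. -/
def SubwordDominated (t w : List α) : Prop :=
  ∀ c, c <+ w → c.IsChain (· ≠ ·) → c <+ t

theorem subwordDominated_nil : SubwordDominated ([] : List α) [] :=
  fun _ hc _ => hc

theorem SubwordDominated.replicate_append {s : α} {t u v : List α} (hu : ∀ a ∈ u, a = s)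
    (h : SubwordDominated t v) : SubwordDominated (s :: t) (u ++ v) := by
  intro c hc hchain
  obtain ⟨c₁, c₂, rfl, hc₁, hc₂⟩ := sublist_append_iff.1 hc
  have h₂ : c₂ <+ t := h c₂ hc₂ hchain.right_of_append
  match c₁, hc₁, hchain with
  | [], _, _ => exact h₂.cons s
  | [a], hc₁, _ => rw [hu a (hc₁.subset (mem_singleton_self a))]; exact h₂.cons_cons s
  | a :: b :: _, hc₁, hchain =>
    exact absurd ((hu a (hc₁.subset (by simp))).trans (hu b (hc₁.subset (by simp))).symm)
      (isChain_cons_cons.1 hchain).1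

theorem not_subwordDominated_destutter_cons [DecidableEq α] {s : α} {t : List α}
    (ht : t.head? ≠ some s) : ¬ SubwordDominated t ((s :: t).destutter (· ≠ ·)) := by
  intro h
  have hle := (isChain_destutter _ _).length_le_length_destutter_ne
    (h _ (Sublist.refl _) (isChain_destutter _ _))
  have hd : (s :: t).destutter (· ≠ ·) = s :: t.destutter (· ≠ ·) :=
    destutter_replicate_append ht 0
  rw [hd, length_cons] at hle
  omega

end List

/-- Formal power series with integer coefficients in noncommuting variables `X s`, `s : S`:
`f l` is the coefficient of the monomial `X l₁ ⋯ X lₙ`. -/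
def MagnusSeries (S : Type*) : Type _ := List S → ℤ

namespace MagnusSeries

variable {S : Type*}

instance : One (MagnusSeries S) := ⟨fun | [] => 1 | _ :: _ => 0⟩

instance : Mul (MagnusSeries S) :=
  ⟨fun f g l => ∑ i ∈ Finset.range (l.length + 1), f (l.take i) * g (l.drop i)⟩

theorem mul_apply (f g : MagnusSeries S) (l : List S) :
    (f * g) l = ∑ i ∈ Finset.range (l.length + 1), f (l.take i) * g (l.drop i) := rfl

@[simp] theorem one_apply_nil : (1 : MagnusSeries S) [] = 1 := rfl

theorem one_apply_of_ne_nil {l : List S} (h : l ≠ []) : (1 : MagnusSeries S) l = 0 := by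
  cases l
  · contradiction
  · rfl

@[simp] theorem mul_apply_nil (f g : MagnusSeries S) : (f * g) [] = f [] * g [] := by
  simp [mul_apply]

theorem mul_apply_singleton (f g : MagnusSeries S) (a : S) :
    (f * g) [a] = f [] * g [a] + f [a] * g [] := by
  simp [mul_apply, Finset.sum_range_succ]

protected theorem one_mul (f : MagnusSeries S) : 1 * f = f := by
  funext l
  rw [mul_apply, Finset.sum_eq_single 0 (fun i hi hi0 => ?_) (by simp)]
  · rw [List.take_zero, List.drop_zero, one_apply_nil, one_mul]
  · rw [one_apply_of_ne_nil, zero_mul]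
    rw [Finset.mem_range] at hi
    simp only [ne_eq, List.take_eq_nil_iff, not_or]
    exact ⟨hi0, by rintro rfl; simp_all⟩

protected theorem mul_one (f : MagnusSeries S) : f * 1 = f := by
  funext l
  rw [mul_apply, Finset.sum_eq_single l.length (fun i hi hil => ?_) (by simp)]
  · rw [List.take_length, List.drop_length, one_apply_nil, mul_one]
  · rw [one_apply_of_ne_nil, mul_zero]
    rw [Finset.mem_range] at hi
    simp only [ne_eq, List.drop_eq_nil_iff]
    omega

protected theorem mul_assoc (f g h : MagnusSeries S) : f * g * h = f * (g * h) := by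
  funext l
  set n := l.length
  -- both sides are the sum over `i ≤ j ≤ n` of `f l[0, i) * g l[i, j) * h l[j, n)`
  have lhs : (f * g * h) l = ∑ j ∈ Finset.range (n + 1), ∑ i ∈ Finset.range (j + 1),
      f (l.take i) * g ((l.drop i).take (j - i)) * h (l.drop j) := by
    refine Finset.sum_congr rfl fun j hj => ?_
    rw [Finset.mem_range] at hj
    rw [mul_apply, Finset.sum_mul, List.length_take, min_eq_left (by omega)]
    refine Finset.sum_congr rfl fun i hi => ?_
    rw [Finset.mem_range] at hi
    rw [List.take_take, min_eq_left (by omega), List.drop_take]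
  have rhs : (f * (g * h)) l = ∑ i ∈ Finset.range (n + 1), ∑ j ∈ Finset.Ico i (n + 1),
      f (l.take i) * g ((l.drop i).take (j - i)) * h (l.drop j) := by
    refine Finset.sum_congr rfl fun i hi => ?_
    rw [Finset.mem_range] at hi
    rw [mul_apply, Finset.mul_sum, List.length_drop, Finset.sum_Ico_eq_sum_range,
      show n + 1 - i = n - i + 1 by omega]
    refine Finset.sum_congr rfl fun k _ => ?_
    rw [Nat.add_sub_cancel_left, List.drop_drop, mul_assoc]
  rw [lhs, rhs]
  simpa only [Finset.range_eq_Ico] using (Finset.sum_Ico_Ico_comm 0 (n + 1)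
    fun i j => f (l.take i) * g ((l.drop i).take (j - i)) * h (l.drop j)).symm

instance : Monoid (MagnusSeries S) where
  one_mul := MagnusSeries.one_mul
  mul_one := MagnusSeries.mul_one
  mul_assoc := MagnusSeries.mul_assoc

def constCoeff : MagnusSeries S →* ℤ where
  toFun f := f []
  map_one' := rfl
  map_mul' := mul_apply_nil

@[simp] theorem constCoeff_apply (f : MagnusSeries S) : constCoeff f = f [] := rfl

def WordLT : List S → List S → Prop :=
  InvImage (Prod.Lex (· < ·) WellOrderingRel) fun l => (l.length, l)

instance : IsWellOrder (List S) WordLT :=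
  (RelEmbedding.preimage ⟨fun l : List S => (l.length, l), fun _ _ h => congrArg Prod.snd h⟩
    (Prod.Lex (· < ·) WellOrderingRel)).isWellOrder

theorem wordLT_of_length_lt {v w : List S} (h : v.length < w.length) : WordLT v w :=
  Prod.Lex.left _ _ h

theorem length_le_of_wordLT {v w : List S} (h : WordLT v w) : v.length ≤ w.length := by
  rcases Prod.lex_def.1 h with h | ⟨h, -⟩ <;> simp only at h <;> omega

noncomputable instance : LinearOrder (MagnusSeries S) :=
  letI : LinearOrder (List S) := IsWellOrder.linearOrder WordLT
  haveI : WellFoundedLT (List S) := ⟨IsWellFounded.wf (r := WordLT)⟩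
  inferInstanceAs (LinearOrder (Lex (List S → ℤ)))

theorem lt_def {f g : MagnusSeries S} :
    f < g ↔ ∃ w, (∀ v, WordLT v w → f v = g v) ∧ f w < g w := Iff.rfl

theorem mul_apply_sub_mul_apply_right {f g : MagnusSeries S} (h : MagnusSeries S) {v : List S}
    (hfg : ∀ u : List S, u.length < v.length → f u = g u) :
    (f * h) v - (g * h) v = (f v - g v) * h [] := by
  rw [mul_apply, mul_apply, ← Finset.sum_sub_distrib, Finset.sum_range_succ,
    Finset.sum_eq_zero fun i hi => ?_]
  · simp [sub_mul]
  · rw [Finset.mem_range] at hi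
    rw [hfg _ (by rw [List.length_take]; omega), sub_self]

theorem mul_apply_sub_mul_apply_left {f g : MagnusSeries S} (h : MagnusSeries S) {v : List S}
    (hfg : ∀ u : List S, u.length < v.length → f u = g u) :
    (h * f) v - (h * g) v = h [] * (f v - g v) := by
  rw [mul_apply, mul_apply, ← Finset.sum_sub_distrib, Finset.sum_range_succ',
    Finset.sum_eq_zero fun i hi => ?_]
  · simp [mul_sub]
  · rw [Finset.mem_range] at hi
    rw [hfg _ (by rw [List.length_drop]; omega), sub_self]

theorem eq_of_length_lt {f g : MagnusSeries S} {w : List S} (hw : ∀ v, WordLT v w → f v = g v)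
    {v u : List S} (hv : v.length ≤ w.length) (hu : u.length < v.length) : f u = g u :=
  hw u (wordLT_of_length_lt (by omega))

theorem mul_lt_mul_of_pos_right {f g h : MagnusSeries S} (hfg : f < g) (hh : 0 < h []) :
    f * h < g * h := by
  obtain ⟨w, hw, hlt⟩ := lt_def.1 hfg
  refine lt_def.2 ⟨w, fun v hv => ?_, ?_⟩
  · have := mul_apply_sub_mul_apply_right h fun u => eq_of_length_lt hw (length_le_of_wordLT hv)
    rw [hw v hv, sub_self, zero_mul, sub_eq_zero] at this
    exact this
  · have := mul_apply_sub_mul_apply_right h fun u => eq_of_length_lt hw le_rfl (u := u)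
    nlinarith

theorem mul_lt_mul_of_pos_left {f g h : MagnusSeries S} (hfg : f < g) (hh : 0 < h []) :
    h * f < h * g := by
  obtain ⟨w, hw, hlt⟩ := lt_def.1 hfg
  refine lt_def.2 ⟨w, fun v hv => ?_, ?_⟩
  · have := mul_apply_sub_mul_apply_left h fun u => eq_of_length_lt hw (length_le_of_wordLT hv)
    rw [hw v hv, sub_self, mul_zero, sub_eq_zero] at this
    exact this
  · have := mul_apply_sub_mul_apply_left h fun u => eq_of_length_lt hw le_rfl (u := u)
    nlinarith

open Classical in
noncomputable def onePlusX (s : S) : MagnusSeries S :=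
  fun l => if l = [] ∨ l = [s] then 1 else 0

open Classical in
/-- The series `∑ₙ (-X s)ⁿ`. -/
noncomputable def onePlusXInv (s : S) : MagnusSeries S :=
  fun l => if ∀ a ∈ l, a = s then (-1) ^ l.length else 0

@[simp] theorem onePlusX_nil (s : S) : onePlusX s [] = 1 := by simp [onePlusX]

@[simp] theorem onePlusX_singleton (s : S) : onePlusX s [s] = 1 := by simp [onePlusX]

theorem onePlusX_of_two_le_length (s : S) {l : List S} (h : 2 ≤ l.length) :
    onePlusX s l = 0 := by
  rw [onePlusX, if_neg]
  rintro (rfl | rfl) <;> simp at h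

@[simp] theorem onePlusXInv_nil (s : S) : onePlusXInv s [] = 1 := by simp [onePlusXInv]

theorem onePlusX_singleton_of_ne {s a : S} (h : a ≠ s) : onePlusX s [a] = 0 := by
  simp [onePlusX, h]

theorem onePlusXInv_cons_self (s : S) (l : List S) :
    onePlusXInv s (s :: l) = -onePlusXInv s l := by
  unfold onePlusXInv
  by_cases hl : ∀ b ∈ l, b = s
  · rw [if_pos (by simpa using hl), if_pos hl, List.length_cons, pow_succ, mul_neg_one]
  · rw [if_neg (by simpa using hl), if_neg hl, neg_zero]

theorem onePlusXInv_cons_of_ne {s a : S} (h : a ≠ s) (l : List S) : onePlusXInv s (a :: l) = 0 := by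
  simp [onePlusXInv, h]

theorem onePlusXInv_concat_self (s : S) (l : List S) :
    onePlusXInv s (l ++ [s]) = -onePlusXInv s l := by
  unfold onePlusXInv
  by_cases hl : ∀ b ∈ l, b = s
  · rw [if_pos (by simpa [or_imp, forall_and] using hl), if_pos hl, List.length_append,
      List.length_singleton, pow_succ, mul_neg_one]
  · rw [if_neg (by simpa [or_imp, forall_and] using hl), if_neg hl, neg_zero]

theorem onePlusXInv_concat_of_ne {s a : S} (h : a ≠ s) (l : List S) :
    onePlusXInv s (l ++ [a]) = 0 := by
  simp [onePlusXInv, h]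

theorem onePlusX_mul_apply_cons (s a : S) (f : MagnusSeries S) (l : List S) :
    (onePlusX s * f) (a :: l) = f (a :: l) + onePlusX s [a] * f l := by
  rw [mul_apply, List.length_cons, Finset.sum_range_succ', Finset.sum_range_succ',
    Finset.sum_eq_zero fun i hi => ?_]
  · simp [add_comm]
  · rw [Finset.mem_range] at hi
    rw [onePlusX_of_two_le_length s (by rw [List.length_take, List.length_cons]; omega), zero_mul]

theorem mul_onePlusX_apply_concat (s a : S) (f : MagnusSeries S) (l : List S) :
    (f * onePlusX s) (l ++ [a]) = f (l ++ [a]) + f l * onePlusX s [a] := by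
  rw [mul_apply, List.length_append, List.length_singleton, Finset.sum_range_succ,
    Finset.sum_range_succ, Finset.sum_eq_zero fun i hi => ?_]
  · simp [add_comm, List.take_of_length_le]
  · rw [Finset.mem_range] at hi
    rw [onePlusX_of_two_le_length s
      (by rw [List.length_drop, List.length_append, List.length_singleton]; omega), mul_zero]

theorem onePlusX_mul_onePlusXInv (s : S) : onePlusX s * onePlusXInv s = 1 := by
  funext l
  cases l with
  | nil => simp
  | cons a l =>
    rw [onePlusX_mul_apply_cons, one_apply_of_ne_nil (List.cons_ne_nil a l)]
    by_cases ha : a = s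
    · subst ha
      simp [onePlusXInv_cons_self]
    · simp [onePlusXInv_cons_of_ne ha, onePlusX_singleton_of_ne ha]

theorem onePlusXInv_mul_onePlusX (s : S) : onePlusXInv s * onePlusX s = 1 := by
  funext l
  rcases l.eq_nil_or_concat with rfl | ⟨l, a, rfl⟩
  · simp
  · rw [List.concat_eq_append, mul_onePlusX_apply_concat, one_apply_of_ne_nil (by simp)]
    by_cases ha : a = s
    · subst ha
      simp [onePlusXInv_concat_self]
    · simp [onePlusXInv_concat_of_ne ha, onePlusX_singleton_of_ne ha]

noncomputable def onePlusXUnit (s : S) : (MagnusSeries S)ˣ :=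
  ⟨onePlusX s, onePlusXInv s, onePlusX_mul_onePlusXInv s, onePlusXInv_mul_onePlusX s⟩

def oneVariable (s : S) : Submonoid (MagnusSeries S) where
  carrier := {f | ∀ l, f l ≠ 0 → ∀ a ∈ l, a = s}
  one_mem' l hl := by
    cases l with
    | nil => simp
    | cons a l => exact absurd rfl hl
  mul_mem' {f g} hf hg l hl := by
    obtain ⟨i, -, hi⟩ := Finset.exists_ne_zero_of_sum_ne_zero hl
    rw [← List.take_append_drop i l]
    simp only [List.mem_append]
    rintro a (ha | ha)
    · exact hf _ (left_ne_zero_of_mul hi) a ha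
    · exact hg _ (right_ne_zero_of_mul hi) a ha

theorem onePlusX_mem_oneVariable (s : S) : onePlusX s ∈ oneVariable s := by
  intro l hl
  rcases (by by_contra h; exact hl (if_neg h) : l = [] ∨ l = [s]) with rfl | rfl <;> simp

theorem onePlusXInv_mem_oneVariable (s : S) : onePlusXInv s ∈ oneVariable s := by
  intro l hl
  by_contra h
  exact hl (if_neg h)

theorem pow_apply_singleton {f : MagnusSeries S} (hf : f [] = 1) (a : S) (n : ℕ) :
    (f ^ n) [a] = n * f [a] := by
  induction n with
  | zero => simp [one_apply_of_ne_nil]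
  | succ n ih =>
    have h0 : (f ^ n) [] = 1 := by
      rw [← constCoeff_apply (f ^ n), map_pow, constCoeff_apply, hf, one_pow]
    rw [pow_succ, mul_apply_singleton, ih, hf, h0]
    push_cast
    ring

/-- Only the splitting `[s] ++ t` contributes. -/
theorem mul_apply_cons_of_mem_oneVariable {F P : MagnusSeries S} {s : S}
    (hF : F ∈ oneVariable s) {t : List S} (ht : t.head? ≠ some s) (hP : P (s :: t) = 0) :
    (F * P) (s :: t) = F [s] * P t := by
  rw [mul_apply, List.length_cons, Finset.sum_range_succ', Finset.sum_range_succ',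
    Finset.sum_eq_zero fun i hi => ?_]
  · simp [hP]
  · have htne : t ≠ [] := by rintro rfl; simp at hi
    obtain ⟨b, t', rfl⟩ := List.exists_cons_of_ne_nil htne
    have hb : b ≠ s := fun h => ht (by simp [h])
    by_contra hne
    exact hb (hF _ (left_ne_zero_of_mul hne) b (by simp))

end MagnusSeries

open MagnusSeries

namespace FreeGroup

variable {S : Type*}

noncomputable def magnus : FreeGroup S →* (MagnusSeries S)ˣ :=
  lift onePlusXUnit

theorem magnus_apply_nil (x : FreeGroup S) : (magnus x : MagnusSeries S) [] = 1 := by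
  have : (Units.map constCoeff).comp (magnus : FreeGroup S →* _) = 1 :=
    ext_hom _ _ fun s => Units.ext (onePlusX_nil s)
  exact congrArg Units.val (DFunLike.congr_fun this x)

theorem IsReduced.exists_eq_replicate_append {p : S × Bool} {L₀ : List (S × Bool)}
    (h : IsReduced (p :: L₀)) : ∃ m L', p :: L₀ = List.replicate (m + 1) p ++ L' ∧
      (L'.map Prod.fst).head? ≠ some p.1 := by
  obtain ⟨m, L', rfl, hL'⟩ := List.exists_eq_replicate_append p L₀
  refine ⟨m, L', rfl, ?_⟩
  cases L' with
  | nil => simp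
  | cons q L'' =>
    have hpq : IsReduced (p :: q :: L'') := h.infix <| by
      rw [← List.cons_append, ← List.replicate_succ, List.replicate_succ', List.append_assoc]
      exact (List.suffix_append _ _).isInfix
    have hq : q ≠ p := by simpa using hL'
    simp only [List.map_cons, List.head?_cons, ne_eq, Option.some.injEq]
    exact fun h1 => hq (Prod.ext h1 ((isReduced_cons_cons.1 hpq).1 h1.symm).symm)

theorem mk_replicate (m : ℕ) (p : S × Bool) : mk (List.replicate m p) = mk [p] ^ m := by
  rw [pow_mk, List.flatten_replicate_singleton]

theorem magnus_mk_singleton (p : S × Bool) :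
    (magnus (mk [p]) : MagnusSeries S) = if p.2 then onePlusX p.1 else onePlusXInv p.1 := by
  obtain ⟨s, _ | _⟩ := p
  · change ((magnus (of s)⁻¹ : (MagnusSeries S)ˣ) : MagnusSeries S) = _
    rw [_root_.map_inv, magnus, lift_apply_of]
    rfl
  · change ((magnus (of s) : (MagnusSeries S)ˣ) : MagnusSeries S) = _
    rw [magnus, lift_apply_of]
    rfl

theorem magnus_mk_singleton_mem (p : S × Bool) :
    (magnus (mk [p]) : MagnusSeries S) ∈ oneVariable p.1 := by
  rw [magnus_mk_singleton]
  split
  · exact onePlusX_mem_oneVariable p.1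
  · exact onePlusXInv_mem_oneVariable p.1

theorem magnus_mk_singleton_apply_ne_zero (p : S × Bool) :
    (magnus (mk [p]) : MagnusSeries S) [p.1] ≠ 0 := by
  rw [magnus_mk_singleton]
  split
  · simp
  · simp [onePlusXInv_cons_self]

theorem magnus_mk_support :
    ∀ (L : List (S × Bool)) (w : List S), (magnus (mk L) : MagnusSeries S) w ≠ 0 →
      List.SubwordDominated (L.map Prod.fst) w
  | [], w, h => by
    obtain rfl : w = [] := by
      by_contra hw
      exact h (by rw [← one_eq_mk, _root_.map_one, Units.val_one, one_apply_of_ne_nil hw])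
    exact List.subwordDominated_nil
  | p :: L, w, h => by
    rw [← List.singleton_append, ← mul_mk, _root_.map_mul, Units.val_mul, mul_apply] at h
    obtain ⟨i, -, hi⟩ := Finset.exists_ne_zero_of_sum_ne_zero h
    rw [← List.take_append_drop i w]
    exact .replicate_append (magnus_mk_singleton_mem p _ (left_ne_zero_of_mul hi))
      (magnus_mk_support L _ (right_ne_zero_of_mul hi))

/-- For a reduced word `x_{s₁}^{e₁} ⋯ x_{sₖ}^{eₖ}` (written in syllables), the coefficient of
`X s₁ ⋯ X sₖ` in its Magnus image is `e₁ ⋯ eₖ`; here only its nonvanishing is tracked. -/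
theorem magnus_mk_apply_destutter_ne_zero [DecidableEq S] :
    ∀ {L : List (S × Bool)}, IsReduced L →
      (magnus (mk L) : MagnusSeries S) ((L.map Prod.fst).destutter (· ≠ ·)) ≠ 0
  | [], _ => by simp [← one_eq_mk]
  | p :: L₀, hL => by
    obtain ⟨m, L', hsplit, hhead⟩ := hL.exists_eq_replicate_append
    have hL' : IsReduced L' := hL.infix (hsplit ▸ (List.suffix_append _ _).isInfix)
    set t := L'.map Prod.fst
    have hcons : (p.1 :: t).destutter (· ≠ ·) = p.1 :: t.destutter (· ≠ ·) :=
      List.destutter_replicate_append hhead 0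
    have hF : (magnus (mk (List.replicate (m + 1) p)) : MagnusSeries S) ∈ oneVariable p.1 := by
      rw [mk_replicate, _root_.map_pow, Units.val_pow_eq_pow_val]
      exact pow_mem (magnus_mk_singleton_mem p) _
    have hP : (magnus (mk L') : MagnusSeries S) (p.1 :: t.destutter (· ≠ ·)) = 0 := by
      by_contra h
      exact List.not_subwordDominated_destutter_cons hhead (hcons ▸ magnus_mk_support L' _ h)
    rw [hsplit, ← mul_mk, _root_.map_mul, Units.val_mul, List.map_append, List.map_replicate,
      List.destutter_replicate_append hhead,
      mul_apply_cons_of_mem_oneVariable hF (by rwa [List.head?_destutter]) hP,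
      mk_replicate, _root_.map_pow, Units.val_pow_eq_pow_val,
      pow_apply_singleton (magnus_apply_nil _)]
    exact mul_ne_zero (mul_ne_zero (by positivity) (magnus_mk_singleton_apply_ne_zero p))
      (magnus_mk_apply_destutter_ne_zero hL')
termination_by L => L.length
decreasing_by
  have := congrArg List.length hsplit
  simp only [List.length_append, List.length_replicate] at this
  omega

theorem magnus_injective : Function.Injective (magnus : FreeGroup S →* (MagnusSeries S)ˣ) := by
  classical
  refine (injective_iff_map_eq_one _).2 fun x hx => ?_
  have h := magnus_mk_apply_destutter_ne_zero (isReduced_toWord (x := x))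
  rw [mk_toWord, hx, Units.val_one] at h
  by_contra hx1
  exact h (one_apply_of_ne_nil (by simpa [List.destutter_eq_nil, toWord_eq_nil_iff] using hx1))

theorem exists_linearOrder_mulStrictMono (S : Type*) :
    ∃ _ : LinearOrder (FreeGroup S), MulLeftStrictMono (FreeGroup S) ∧
      MulRightStrictMono (FreeGroup S) := by
  let order : LinearOrder (FreeGroup S) :=
    LinearOrder.lift' (fun x => (magnus x : MagnusSeries S))
      (Units.val_injective.comp magnus_injective)
  have hpos (z : FreeGroup S) : 0 < (magnus z : MagnusSeries S) [] := by
    rw [magnus_apply_nil]; exact one_pos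
  refine ⟨order, ⟨fun z x y (h : (magnus x : MagnusSeries S) < magnus y) => ?_⟩,
    ⟨fun z x y (h : (magnus x : MagnusSeries S) < magnus y) => ?_⟩⟩
  · change (magnus (z * x) : MagnusSeries S) < magnus (z * y)
    simpa only [_root_.map_mul, Units.val_mul] using mul_lt_mul_of_pos_left h (hpos z)
  · change (magnus (x * z) : MagnusSeries S) < magnus (y * z)
    simpa only [_root_.map_mul, Units.val_mul] using mul_lt_mul_of_pos_right h (hpos z)

def invertGenerators : MulAut (FreeGroup S) :=
  let f : FreeGroup S →* FreeGroup S := lift fun s => (of s)⁻¹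
  have hf : f.comp f = MonoidHom.id _ := ext_hom _ _ fun s => by simp [f]
  MonoidHom.toMulEquiv f f hf hf

@[simp] theorem invertGenerators_of (s : S) : invertGenerators (of s) = (of s)⁻¹ :=
  lift_apply_of (f := fun s => (of s)⁻¹)

theorem invertGenerators_mul_self :
    invertGenerators * invertGenerators = (1 : MulAut (FreeGroup S)) :=
  MulEquiv.toMonoidHom_injective <| ext_hom _ _ fun s => by simp

end FreeGroup

def involutionHom {G : Type*} [Group G] (g : G) (hg : g * g = 1) :
    Multiplicative (ZMod 2) →* G where
  toFun a := g ^ a.toAdd.val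
  map_one' := pow_zero g
  map_mul' a b := by
    rw [toAdd_mul, ZMod.val_add, ← pow_add]
    exact (pow_eq_pow_mod _ (by rwa [pow_two])).symm

@[simp] theorem involutionHom_ofAdd_one {G : Type*} [Group G] (g : G) (hg : g * g = 1) :
    involutionHom g hg (Multiplicative.ofAdd 1) = g :=
  pow_one g

namespace UCox

open FreeGroup SemidirectProduct Multiplicative

variable {S : Type*}

theorem of_mul_self (s : S) : (PresentedGroup.of s : UCox S) * PresentedGroup.of s = 1 := by
  have : PresentedGroup.mk _ (of s ^ 2) = (1 : UCox S) :=
    (QuotientGroup.eq_one_iff _).2 (Subgroup.subset_normalClosure ⟨s, rfl⟩)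
  rwa [_root_.map_pow, pow_two] at this

theorem of_inv (s : S) : (PresentedGroup.of s : UCox S)⁻¹ = PresentedGroup.of s :=
  inv_eq_of_mul_eq_one_right (of_mul_self s)

abbrev invertAction : Multiplicative (ZMod 2) →* MulAut (FreeGroup S) :=
  involutionHom invertGenerators invertGenerators_mul_self

def toSemidirect : UCox S →* FreeGroup S ⋊[invertAction] Multiplicative (ZMod 2) :=
  PresentedGroup.toGroup (f := fun s => inl (of s) * inr (ofAdd 1)) <| by
    rintro _ ⟨s, rfl⟩
    rw [map_pow, lift_apply_of]
    ext
    · simp [pow_two]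
    · simp [pow_two, ← ofAdd_add, CharTwo.add_self_eq_zero]

@[simp] theorem toSemidirect_of (s : S) :
    toSemidirect (PresentedGroup.of s) = inl (of s) * inr (ofAdd (1 : ZMod 2)) :=
  PresentedGroup.toGroup.of _

def ofSemidirect (t : S) : FreeGroup S ⋊[invertAction] Multiplicative (ZMod 2) →* UCox S :=
  lift (FreeGroup.lift fun s => PresentedGroup.of s * PresentedGroup.of t)
    (involutionHom (PresentedGroup.of t) (of_mul_self t)) <| by
    intro g
    refine FreeGroup.ext_hom _ _ fun s => ?_
    rcases (by decide : ∀ g : Multiplicative (ZMod 2), g = 1 ∨ g = ofAdd 1) g with rfl | rfl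
    · simp
    · simp [of_inv, mul_assoc, of_mul_self]

theorem ofSemidirect_toSemidirect (t : S) (u : UCox S) : ofSemidirect t (toSemidirect u) = u := by
  have : (ofSemidirect t).comp toSemidirect = MonoidHom.id (UCox S) :=
    PresentedGroup.ext fun s => by simp [ofSemidirect, mul_assoc, of_mul_self]
  exact DFunLike.congr_fun this u

abbrev reflections (S : Type*) : Set (UCox S) := conjSet (UCox S) (Set.range PresentedGroup.of)

theorem mul_self_of_mem_reflections {a : UCox S} (ha : a ∈ reflections S) : a * a = 1 := by
  obtain ⟨_, ⟨s, rfl⟩, g, rfl⟩ := ha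
  calc g * PresentedGroup.of s * g⁻¹ * (g * PresentedGroup.of s * g⁻¹)
      = g * (PresentedGroup.of s * PresentedGroup.of s) * g⁻¹ := by group
    _ = 1 := by rw [of_mul_self, mul_one, mul_inv_cancel]

theorem right_toSemidirect_of_mem_reflections {a : UCox S} (ha : a ∈ reflections S) :
    (toSemidirect a).right = ofAdd 1 := by
  obtain ⟨_, ⟨s, rfl⟩, g, rfl⟩ := ha
  simp [mul_comm]

theorem left_toSemidirect_conj {a z : UCox S} (ha : a ∈ reflections S) (hz : z ∈ reflections S) :
    (toSemidirect (a * z * a⁻¹)).left =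
      (toSemidirect a).left * invertGenerators (toSemidirect z).left * (toSemidirect a).left := by
  have h2 : (ofAdd 1 * ofAdd 1 : Multiplicative (ZMod 2)) = 1 := by decide
  rw [inv_eq_of_mul_eq_one_right (mul_self_of_mem_reflections ha)]
  simp [mul_left, mul_right, right_toSemidirect_of_mem_reflections ha,
    right_toSemidirect_of_mem_reflections hz, h2]

theorem injOn_left_toSemidirect :
    Set.InjOn (fun a => (toSemidirect a).left) (reflections S) := by
  intro a ha b hb hab
  obtain ⟨_, ⟨t, -⟩, -⟩ := id ha
  have : toSemidirect a = toSemidirect b :=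
    SemidirectProduct.ext hab ((right_toSemidirect_of_mem_reflections ha).trans
      (right_toSemidirect_of_mem_reflections hb).symm)
  rw [← ofSemidirect_toSemidirect t a, this, ofSemidirect_toSemidirect]

end UCox

theorem exists_isStrictTotalOrder_of_injective {Q G : Type*} [Group G] [LinearOrder G]
    [MulLeftStrictMono G] [MulRightStrictMono G] (op : Q → Q → Q) (ι : Q → G)
    (hι : Function.Injective ι) (c : Q → G) (h : ∀ z a, ι (op z a) = ι a * c z * ι a) :
    ∃ r : Q → Q → Prop, IsStrictTotalOrder Q r ∧ ∀ z a b, r a b → r (op z a) (op z b) := by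
  let _ : LinearOrder Q := LinearOrder.lift' ι hι
  refine ⟨(· < ·), inferInstance, fun z a b (hab : ι a < ι b) => ?_⟩
  change ι (op z a) < ι (op z b)
  rw [h, h]
  exact mul_lt_mul_of_lt_of_lt (mul_lt_mul_left hab _) hab

/-- The free involutory quandle on `S`, i.e. the Dehn quandle of the universal Coxeter
group on `S` with respect to its standard generators, is left orderable: it admits a
strict linear order preserved by all left translations `x ↦ z * x` (here
`dehnOp z a` is the paper's `z * a`, with `a` the acting element varying). -/
theorem free_involutory_quandle_left_orderable (S : Type*) :
    ∃ r : conjSet (UCox S) (Set.range (PresentedGroup.of : S → UCox S)) →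
          conjSet (UCox S) (Set.range (PresentedGroup.of : S → UCox S)) → Prop,
      IsStrictTotalOrder _ r ∧
      ∀ z a b : conjSet (UCox S) (Set.range (PresentedGroup.of : S → UCox S)),
        r a b → r (dehnOp z a) (dehnOp z b) := by
  obtain ⟨_, _, _⟩ := FreeGroup.exists_linearOrder_mulStrictMono S
  exact exists_isStrictTotalOrder_of_injective dehnOp
    (fun a => (UCox.toSemidirect (a : UCox S)).left)
    (fun a b h => Subtype.ext (UCox.injOn_left_toSemidirect a.2 b.2 h))
    (fun z => FreeGroup.invertGenerators (UCox.toSemidirect (z : UCox S)).left)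
    (fun z a => UCox.left_toSemidirect_conj a.2 z.2)
end
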